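/- Let λ > 0 and s̃ ≥ 1 be an integer, and suppose x* is a minimizer of φ_λ over ℝⁿ with ‖x*_{S̄ᶜ}‖₀ ≤ s̃. Then for every x ∈ ℝⁿ with ‖x_{S̄ᶜ}‖₀ ≤ s̃, we have φ_λ(x) − φ_λ(x*) ≥ (ρ₋(A, s̄+2s̃)/2) · ‖x − x*‖₂². -/

import Mathlib

open scoped BigOperators
open Matrix

noncomputable section

namespace PGH

/-- Euclidean dot product on `Fin n → ℝ`. -/
def dot {n : ℕ} (x y : Fin n → ℝ) : ℝ := ∑ i, x i * y i

/-- Squared Euclidean norm. -/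
def sqnorm {n : ℕ} (x : Fin n → ℝ) : ℝ := ∑ i, (x i) ^ 2

/-- Euclidean (ℓ₂) norm. -/
noncomputable def l2 {n : ℕ} (x : Fin n → ℝ) : ℝ := Real.sqrt (sqnorm x)

/-- ℓ₁ norm. -/
def l1 {n : ℕ} (x : Fin n → ℝ) : ℝ := ∑ i, |x i|

/-- ℓ∞ norm (maximum absolute coordinate). -/
noncomputable def linf {n : ℕ} (x : Fin n → ℝ) : ℝ := ⨆ i, |x i|

/-- Support of a vector. -/
def supp {n : ℕ} (x : Fin n → ℝ) : Finset (Fin n) := Finset.univ.filter (fun i => x i ≠ 0)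

/-- Number of nonzero coordinates. -/
def l0 {n : ℕ} (x : Fin n → ℝ) : ℕ := (supp x).card

/-- Number of nonzero coordinates within the index set `S`
(i.e. `‖x_S‖₀` for the restriction of `x` to `S`). -/
def l0on {n : ℕ} (S : Finset (Fin n)) (x : Fin n → ℝ) : ℕ :=
  (S.filter (fun i => x i ≠ 0)).card

/-- ℓ₁ norm of the restriction of `x` to the index set `S`. -/
def l1on {n : ℕ} (S : Finset (Fin n)) (x : Fin n → ℝ) : ℝ := ∑ i ∈ S, |x i|

/-- Gradient of `f(x) = (1/2)‖Ax - b‖₂²`, namely `Aᵀ(Ax - b)`. -/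
def grad {m n : ℕ} (A : Matrix (Fin m) (Fin n) ℝ) (b : Fin m → ℝ) (x : Fin n → ℝ) :
    Fin n → ℝ :=
  Aᵀ.mulVec (A.mulVec x - b)

/-- Least-squares objective `f(x) = (1/2)‖Ax - b‖₂²`. -/
def fls {m n : ℕ} (A : Matrix (Fin m) (Fin n) ℝ) (b : Fin m → ℝ) (x : Fin n → ℝ) : ℝ :=
  sqnorm (A.mulVec x - b) / 2

/-- ℓ₁-regularized least-squares objective `φ_λ(x) = f(x) + λ‖x‖₁`. -/
def phi {m n : ℕ} (A : Matrix (Fin m) (Fin n) ℝ) (b : Fin m → ℝ) (lam : ℝ)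
    (x : Fin n → ℝ) : ℝ :=
  fls A b x + lam * l1 x

/-- Restricted maximal eigenvalue `ρ₊(A, s)`. -/
noncomputable def rhoPlus {m n : ℕ} (A : Matrix (Fin m) (Fin n) ℝ) (s : ℕ) : ℝ :=
  sSup {r | ∃ x : Fin n → ℝ, x ≠ 0 ∧ l0 x ≤ s ∧ r = sqnorm (A.mulVec x) / sqnorm x}

/-- Restricted minimal eigenvalue `ρ₋(A, s)`. -/
noncomputable def rhoMinus {m n : ℕ} (A : Matrix (Fin m) (Fin n) ℝ) (s : ℕ) : ℝ :=
  sInf {r | ∃ x : Fin n → ℝ, x ≠ 0 ∧ l0 x ≤ s ∧ r = sqnorm (A.mulVec x) / sqnorm x}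

/-- `ξ` is a subgradient of the ℓ₁ norm at `x`. -/
def IsSubgrad {n : ℕ} (x ξ : Fin n → ℝ) : Prop :=
  ∀ i, (x i ≠ 0 → ξ i = Real.sign (x i)) ∧ (x i = 0 → |ξ i| ≤ 1)

/-- Optimality residue `ω_λ(x) = min_{ξ ∈ ∂‖x‖₁} ‖Aᵀ(Ax−b) + λξ‖_∞`. -/
noncomputable def omega {m n : ℕ} (A : Matrix (Fin m) (Fin n) ℝ) (b : Fin m → ℝ)
    (lam : ℝ) (x : Fin n → ℝ) : ℝ :=
  sInf {r | ∃ ξ : Fin n → ℝ, IsSubgrad x ξ ∧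
    r = linf (fun i => grad A b x i + lam * ξ i)}

/-- The local model `ψ_{λ,L}(y; x)`. -/
def psi {m n : ℕ} (A : Matrix (Fin m) (Fin n) ℝ) (b : Fin m → ℝ) (lam L : ℝ)
    (y x : Fin n → ℝ) : ℝ :=
  fls A b y + dot (grad A b y) (x - y) + L / 2 * sqnorm (x - y) + lam * l1 x

/-- The noise-domination condition
`λ ≥ max{4, (γ+1)/((1−δ')γ−(1+δ'))} ⬝ ‖Aᵀz‖_∞`. -/
def noiseCond {m n : ℕ} (A : Matrix (Fin m) (Fin n) ℝ) (z : Fin m → ℝ)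
    (dp gam lam : ℝ) : Prop :=
  lam ≥ max 4 ((gam + 1) / ((1 - dp) * gam - (1 + dp))) * linf (Aᵀ.mulVec z)

/-!
With `h = x - x*`, the objective expands exactly as
`φ_λ(x) - φ_λ(x*) = ⟨Ax* - b, Ah⟩ + λ(‖x‖₁ - ‖x*‖₁) + ‖Ah‖²/2`.
The first two terms together are nonnegative by first-order optimality of the minimizer `x*`
(compare `φ_λ` along the segment `x* + t h`, `t ↓ 0`). Outside `S̄` both `x` and `x*` have at
most `s̃` nonzero entries, so `‖h‖₀ ≤ s̄ + 2s̃` and `‖Ah‖² ≥ ρ₋(A, s̄ + 2s̃) ‖h‖²`.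
-/

open Filter Topology Set

lemma sqnorm_nonneg {n : ℕ} (x : Fin n → ℝ) : 0 ≤ sqnorm x :=
  Finset.sum_nonneg fun _ _ => sq_nonneg _

lemma sqnorm_add_smul {n : ℕ} (u v : Fin n → ℝ) (t : ℝ) :
    sqnorm (u + t • v) = sqnorm u + 2 * t * dot u v + t ^ 2 * sqnorm v := by
  simp only [sqnorm, dot, Pi.add_apply, Pi.smul_apply, smul_eq_mul, Finset.mul_sum,
    ← Finset.sum_add_distrib]
  exact Finset.sum_congr rfl fun i _ => by ring

lemma fls_add_smul {m n : ℕ} (A : Matrix (Fin m) (Fin n) ℝ) (b : Fin m → ℝ)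
    (x h : Fin n → ℝ) (t : ℝ) :
    fls A b (x + t • h) =
      fls A b x + t * dot (A *ᵥ x - b) (A *ᵥ h) + t ^ 2 / 2 * sqnorm (A *ᵥ h) := by
  have hres : A *ᵥ (x + t • h) - b = (A *ᵥ x - b) + t • A *ᵥ h := by
    rw [mulVec_add, mulVec_smul]; abel
  rw [fls, fls, hres, sqnorm_add_smul]; ring

lemma l1_add_smul_sub_le {n : ℕ} (u v : Fin n → ℝ) {t : ℝ} (ht₀ : 0 ≤ t) (ht₁ : t ≤ 1) :
    l1 (u + t • (v - u)) ≤ (1 - t) * l1 u + t * l1 v := by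
  simp only [l1, Finset.mul_sum, ← Finset.sum_add_distrib]
  refine Finset.sum_le_sum fun i _ => ?_
  calc |u i + t * (v i - u i)| = |(1 - t) * u i + t * v i| := by ring_nf
    _ ≤ |(1 - t) * u i| + |t * v i| := abs_add_le _ _
    _ = (1 - t) * |u i| + t * |v i| := by
        rw [abs_mul, abs_mul, abs_of_nonneg (sub_nonneg.2 ht₁), abs_of_nonneg ht₀]

lemma nonneg_of_forall_mul_add_sq_mul_nonneg {a q : ℝ}
    (h : ∀ t ∈ Ioc (0 : ℝ) 1, 0 ≤ t * a + t ^ 2 * q) : 0 ≤ a := by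
  have hlim : Tendsto (fun t : ℝ => a + t * q) (𝓝[>] 0) (𝓝 a) := by
    have : Tendsto (fun t : ℝ => a + t * q) (𝓝 0) (𝓝 (a + 0 * q)) :=
      (continuous_const.add (continuous_id.mul continuous_const)).tendsto 0
    simpa using this.mono_left nhdsWithin_le_nhds
  refine ge_of_tendsto hlim ?_
  filter_upwards [Ioc_mem_nhdsGT one_pos] with t ht
  refine (mul_nonneg_iff_of_pos_left ht.1).1 ?_
  linarith [h t ht]

lemma phi_add_smul_sub_le {m n : ℕ} (A : Matrix (Fin m) (Fin n) ℝ) (b : Fin m → ℝ)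
    {lam : ℝ} (hlam : 0 ≤ lam) (y x : Fin n → ℝ) {t : ℝ} (ht₀ : 0 ≤ t) (ht₁ : t ≤ 1) :
    phi A b lam (y + t • (x - y)) - phi A b lam y ≤
      t * (dot (A *ᵥ y - b) (A *ᵥ (x - y)) + lam * (l1 x - l1 y))
        + t ^ 2 / 2 * sqnorm (A *ᵥ (x - y)) := by
  have hl1 := mul_le_mul_of_nonneg_left (l1_add_smul_sub_le y x ht₀ ht₁) hlam
  rw [phi, phi, fls_add_smul]
  linarith

lemma phi_sub_phi_eq {m n : ℕ} (A : Matrix (Fin m) (Fin n) ℝ) (b : Fin m → ℝ) (lam : ℝ)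
    (y x : Fin n → ℝ) :
    phi A b lam x - phi A b lam y =
      dot (A *ᵥ y - b) (A *ᵥ (x - y)) + lam * (l1 x - l1 y) + sqnorm (A *ᵥ (x - y)) / 2 := by
  have hfls := fls_add_smul A b y (x - y) 1
  rw [one_smul, add_sub_cancel] at hfls
  rw [phi, phi, hfls]
  ring

-- First-order optimality of `y`, through convexity of `‖·‖₁` on the segment from `y` to `x`.
lemma dot_add_mul_l1_sub_nonneg_of_isMin {m n : ℕ} (A : Matrix (Fin m) (Fin n) ℝ)
    (b : Fin m → ℝ) {lam : ℝ} (hlam : 0 ≤ lam) {y : Fin n → ℝ}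
    (hmin : ∀ u, phi A b lam y ≤ phi A b lam u) (x : Fin n → ℝ) :
    0 ≤ dot (A *ᵥ y - b) (A *ᵥ (x - y)) + lam * (l1 x - l1 y) := by
  refine nonneg_of_forall_mul_add_sq_mul_nonneg (q := sqnorm (A *ᵥ (x - y)) / 2) fun t ht => ?_
  have := phi_add_smul_sub_le A b hlam y x ht.1.le ht.2
  linarith [hmin (y + t • (x - y))]

lemma sqnorm_mulVec_sub_le_phi_sub_of_isMin {m n : ℕ} (A : Matrix (Fin m) (Fin n) ℝ)
    (b : Fin m → ℝ) {lam : ℝ} (hlam : 0 ≤ lam) {y : Fin n → ℝ}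
    (hmin : ∀ u, phi A b lam y ≤ phi A b lam u) (x : Fin n → ℝ) :
    sqnorm (A *ᵥ (x - y)) / 2 ≤ phi A b lam x - phi A b lam y := by
  rw [phi_sub_phi_eq]
  linarith [dot_add_mul_l1_sub_nonneg_of_isMin A b hlam hmin x]

lemma rhoMinus_mul_sqnorm_le {m n : ℕ} (A : Matrix (Fin m) (Fin n) ℝ) {s : ℕ}
    {v : Fin n → ℝ} (hv : l0 v ≤ s) : rhoMinus A s * sqnorm v ≤ sqnorm (A *ᵥ v) := by
  by_cases hv0 : sqnorm v = 0
  · rw [hv0, mul_zero]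
    exact sqnorm_nonneg _
  have hne : v ≠ 0 := by
    rintro rfl
    simp [sqnorm] at hv0
  have hbdd : BddBelow {r | ∃ w : Fin n → ℝ, w ≠ 0 ∧ l0 w ≤ s ∧
      r = sqnorm (A *ᵥ w) / sqnorm w} := by
    refine ⟨0, ?_⟩
    rintro r ⟨w, -, -, rfl⟩
    exact div_nonneg (sqnorm_nonneg _) (sqnorm_nonneg _)
  have hle : rhoMinus A s ≤ sqnorm (A *ᵥ v) / sqnorm v := csInf_le hbdd ⟨v, hne, hv, rfl⟩
  calc rhoMinus A s * sqnorm v ≤ sqnorm (A *ᵥ v) / sqnorm v * sqnorm v :=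
        mul_le_mul_of_nonneg_right hle (sqnorm_nonneg v)
    _ = sqnorm (A *ᵥ v) := div_mul_cancel₀ _ hv0

lemma l0_le_l0on_add_l0on_compl {n : ℕ} (S : Finset (Fin n)) (v : Fin n → ℝ) :
    l0 v ≤ l0on S v + l0on Sᶜ v := by
  have hsplit : supp v = S.filter (fun i => v i ≠ 0) ∪ Sᶜ.filter (fun i => v i ≠ 0) := by
    rw [← Finset.filter_union, Finset.union_compl]
    rfl
  rw [l0, hsplit]
  exact Finset.card_union_le _ _

lemma l0on_sub_le {n : ℕ} (S : Finset (Fin n)) (x y : Fin n → ℝ) :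
    l0on S (x - y) ≤ l0on S x + l0on S y := by
  have hsub : S.filter (fun i => (x - y) i ≠ 0) ⊆
      S.filter (fun i => x i ≠ 0) ∪ S.filter (fun i => y i ≠ 0) := by
    rw [← Finset.filter_or]
    refine Finset.monotone_filter_right S fun i _ hi => ?_
    by_contra! h
    exact hi (by simp [h.1, h.2])
  exact (Finset.card_le_card hsub).trans (Finset.card_union_le _ _)

lemma l0_sub_le {n : ℕ} (S : Finset (Fin n)) (x y : Fin n → ℝ) :
    l0 (x - y) ≤ S.card + l0on Sᶜ x + l0on Sᶜ y := by
  have hS : l0on S (x - y) ≤ S.card := Finset.card_filter_le _ _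
  linarith [l0_le_l0on_add_l0on_compl S (x - y), l0on_sub_le Sᶜ x y]

theorem stmt9_general {m n : ℕ} (A : Matrix (Fin m) (Fin n) ℝ) (b : Fin m → ℝ)
    (S : Finset (Fin n)) (lam : ℝ) (hlam : 0 < lam) (st : ℕ)
    (xstar : Fin n → ℝ) (hmin : ∀ u, phi A b lam xstar ≤ phi A b lam u)
    (hsp : l0on Sᶜ xstar ≤ st)
    (x : Fin n → ℝ) (hx : l0on Sᶜ x ≤ st) :
    phi A b lam x - phi A b lam xstar ≥
      rhoMinus A (S.card + 2 * st) / 2 * sqnorm (x - xstar) := by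
  have hsupp : l0 (x - xstar) ≤ S.card + 2 * st := by
    linarith [l0_sub_le S x xstar]
  have hrho := rhoMinus_mul_sqnorm_le A hsupp
  have hopt := sqnorm_mulVec_sub_le_phi_sub_of_isMin A b hlam.le hmin x
  linarith

theorem stmt9 {m n : ℕ} (A : Matrix (Fin m) (Fin n) ℝ) (b : Fin m → ℝ)
    (S : Finset (Fin n)) (lam : ℝ) (hlam : 0 < lam) (st : ℕ) (hst : 1 ≤ st)
    (xstar : Fin n → ℝ) (hmin : ∀ u, phi A b lam xstar ≤ phi A b lam u)
    (hsp : l0on Sᶜ xstar ≤ st)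
    (x : Fin n → ℝ) (hx : l0on Sᶜ x ≤ st) :
    phi A b lam x - phi A b lam xstar ≥
      rhoMinus A (S.card + 2 * st) / 2 * sqnorm (x - xstar) :=
  stmt9_general A b S lam hlam st xstar hmin hsp x hx

end PGH
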